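/- Let (a_i) and (b_i) be n-tuples of positive reals with p ≥ a_i/b_i ≥ q for all i, for some p, q > 0. Then ∑_i a_i↓ b_i↓ ≤ ((p+q)/(2√(pq)))·∑_i a_i b_i, where a↓ denotes the nonincreasing rearrangement. -/
import Mathlib


theorem reverse_rearrangement {n : ℕ} (a b : Fin n → ℝ)
    (ha : ∀ i, 0 < a i) (hb : ∀ i, 0 < b i) (p q : ℝ) (hp : 0 < p) (hq : 0 < q)
    (hratio : ∀ i, q ≤ a i / b i ∧ a i / b i ≤ p)
    (σ τ : Equiv.Perm (Fin n)) (hσ : Antitone (a ∘ σ)) (hτ : Antitone (b ∘ τ)) :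
    ∑ i, a (σ i) * b (τ i) ≤ (p + q) / (2 * Real.sqrt (p * q)) * ∑ i, a i * b i := by
  have hpq : (0:ℝ) < Real.sqrt (p * q) := Real.sqrt_pos.2 (mul_pos hp hq)
  set A := ∑ i, (a i) ^ 2 with hAdef
  set B := ∑ i, (b i) ^ 2 with hBdef
  set S := ∑ i, a (σ i) * b (τ i) with hSdef
  set T := ∑ i, a i * b i with hTdef
  have hA : 0 ≤ A := Finset.sum_nonneg fun i _ => sq_nonneg _
  have hB : 0 ≤ B := Finset.sum_nonneg fun i _ => sq_nonneg _
  have hS0 : 0 ≤ S := Finset.sum_nonneg fun i _ => (mul_pos (ha _) (hb _)).le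
  have hCS : S ^ 2 ≤ A * B := by
    have h := Finset.sum_mul_sq_le_sq_mul_sq Finset.univ (fun i => a (σ i)) (fun i => b (τ i))
    have h1 : ∑ i, (a (σ i)) ^ 2 = A := Equiv.sum_comp σ (fun i => (a i) ^ 2)
    have h2 : ∑ i, (b (τ i)) ^ 2 = B := Equiv.sum_comp τ (fun i => (b i) ^ 2)
    calc S ^ 2 ≤ (∑ i, (a (σ i)) ^ 2) * (∑ i, (b (τ i)) ^ 2) := h
    _ = A * B := by rw [h1, h2]
  have h1 : S ≤ Real.sqrt A * Real.sqrt B := by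
    rw [← Real.sqrt_mul hA]
    exact (Real.le_sqrt hS0 (mul_nonneg hA hB)).2 hCS
  have hA2 : Real.sqrt A ^ 2 = A := Real.sq_sqrt hA
  have hB2 : Real.sqrt B ^ 2 = B := Real.sq_sqrt hB
  have hpq2 : Real.sqrt (p * q) ^ 2 = p * q := Real.sq_sqrt (mul_pos hp hq).le
  have h2 : 2 * Real.sqrt (p * q) * (Real.sqrt A * Real.sqrt B) ≤ A + p * q * B := by
    nlinarith [sq_nonneg (Real.sqrt A - Real.sqrt (p * q) * Real.sqrt B)]
  have h3 : A + p * q * B ≤ (p + q) * T := by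
    have key : ∀ i, a i ^ 2 + p * q * b i ^ 2 ≤ (p + q) * (a i * b i) := by
      intro i
      have hbi := hb i
      have hq' : q * b i ≤ a i := (le_div_iff₀ hbi).1 (hratio i).1
      have hp' : a i ≤ p * b i := (div_le_iff₀ hbi).1 (hratio i).2
      nlinarith [mul_nonneg (sub_nonneg.2 hq') (sub_nonneg.2 hp')]
    calc A + p * q * B = ∑ i, (a i ^ 2 + p * q * b i ^ 2) := by
          rw [hAdef, hBdef, Finset.mul_sum, ← Finset.sum_add_distrib]
      _ ≤ ∑ i, (p + q) * (a i * b i) := Finset.sum_le_sum fun i _ => key i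
      _ = (p + q) * T := by rw [hTdef, Finset.mul_sum]
  rw [div_mul_eq_mul_div, le_div_iff₀ (by positivity)]
  have h1' : S * (2 * Real.sqrt (p * q)) ≤ Real.sqrt A * Real.sqrt B * (2 * Real.sqrt (p * q)) :=
    mul_le_mul_of_nonneg_right h1 (by positivity)
  nlinarith
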